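/- Let S ⊆ ℝⁿ be measurable, let α : ℝⁿ × ℝⁿ → ℝⁿ be antisymmetric (α(x,y) = -α(y,x) for all x,y), let Θ : ℝⁿ × ℝⁿ → ℝ^{n×n} satisfy Θ(x,y) = Θ(y,x) for all x,y, let μ : ℝⁿ × ℝⁿ → ℝⁿ, and let u : ℝⁿ → ℝ. Define the jump-rate kernel γ(x,y) := 2 α(x,y) · Θ(x,y) α(x,y) − μ(x,y) · α(x,y). Then for every x for which the integrand below is integrable in y over S, the nonlocal convection–diffusion operator coincides with the master-equation operator: D_S(μ u − Θ D*u)(x) = ∫_S ( u(y) γ(y,x) − u(x) γ(x,y) ) dy, where (μ u)(x,y) := u(x) μ(x,y) and (Θ D*u)(x,y) := Θ(x,y) (D*u)(x,y). -/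
import Mathlib


open MeasureTheory RealInnerProductSpace

/-- Euclidean space `ℝⁿ`. -/
abbrev Euc (n : ℕ) := EuclideanSpace ℝ (Fin n)

/-- The nonlocal divergence over `S`: `D_S(f)(x) := ∫_S (f(x,y) + f(y,x)) · α(x,y) dy`. -/
noncomputable def nldivS {n : ℕ} (S : Set (Euc n)) (a f : Euc n → Euc n → Euc n)
    (x : Euc n) : ℝ :=
  ∫ y in S, ⟪f x y + f y x, a x y⟫

/-- The nonlocal gradient adjoint: `(D*u)(x,y) := -(u(y) - u(x)) α(x,y)`. -/
noncomputable def nlgrad {n : ℕ} (a : Euc n → Euc n → Euc n) (u : Euc n → ℝ)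
    (x y : Euc n) : Euc n :=
  -(u y - u x) • a x y

/-- The nonlocal convection–diffusion operator coincides with the master-equation
operator: with `γ(x,y) := 2 α(x,y) · Θ(x,y) α(x,y) − μ(x,y) · α(x,y)`, one has
`D_S(μ u − Θ D*u)(x) = ∫_S ( u(y) γ(y,x) − u(x) γ(x,y) ) dy`, where `Θ` is a
symmetric matrix-valued kernel (realized as a linear map on `ℝⁿ` for each `(x,y)`)
and `α` is antisymmetric. -/
theorem nldivS_convection_diffusion_eq_master {n : ℕ}
    (S : Set (Euc n)) (hS : MeasurableSet S)
    (a : Euc n → Euc n → Euc n)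
    (ha : ∀ x y, a x y = - a y x)
    (Θ : Euc n → Euc n → (Euc n →ₗ[ℝ] Euc n))
    (hΘ : ∀ x y, Θ x y = Θ y x)
    (μ : Euc n → Euc n → Euc n)
    (u : Euc n → ℝ)
    (γ : Euc n → Euc n → ℝ)
    (hγ : ∀ x y, γ x y = 2 * ⟪a x y, Θ x y (a x y)⟫ - ⟪μ x y, a x y⟫)
    (x : Euc n)
    (hint : IntegrableOn (fun y => u y * γ y x - u x * γ x y) S) :
    nldivS S a (fun x y => u x • μ x y - Θ x y (nlgrad a u x y)) x =
      ∫ y in S, (u y * γ y x - u x * γ x y) := by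
  unfold nldivS
  congr 1
  funext y
  have hθ := congrArg (fun T : Euc n →ₗ[ℝ] Euc n => T (a x y)) (hΘ x y)
  simp only [nlgrad, hγ, ha x y, hΘ x y, smul_neg, _root_.map_smul, inner_sub_left, inner_add_left,
    real_inner_smul_left, real_inner_smul_right, inner_neg_left, inner_neg_right,
    inner_neg_neg, map_neg, neg_neg, LinearMap.map_neg,
    real_inner_comm (Θ y x (a y x)) (a y x)]
  ring
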